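/- In the 3-node connected Kripke model with b ≽ a, b ≽ c, where a forces only p and b forces p and q (c forces nothing), every formula θ built from p, q, ⊤ using only ¬, ∨, ∧ satisfies: if both b and c force θ, then a forces θ. -/

import Mathlib

/-! Forcing at `c` alone suffices, by induction on the `→`-free formula. Atoms are trivial since
`c` forces none, `∧` and `∨` are immediate, and a negation `¬φ` forced at `c` is forced at `a`:
every node above `a` lies below `b ≥ c`, so by monotonicity a node above `a` forcing `φ` would make
`b`, hence a node above `c`, force `φ`. -/

inductive Fm (α : Type) : Type where
  | top  : Fm α
  | atom : α → Fm α
  | neg  : Fm α → Fm α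
  | and  : Fm α → Fm α → Fm α
  | or   : Fm α → Fm α → Fm α
  | imp  : Fm α → Fm α → Fm α

structure KripkeModel (α : Type) : Type 1 where
  K : Type
  le : K → K → Prop
  refl : ∀ k, le k k
  trans : ∀ {a b c}, le a b → le b c → le a c
  antisymm : ∀ {a b}, le a b → le b a → a = b
  val : K → α → Prop
  persist : ∀ {k k' p}, le k k' → val k p → val k' p

def force {α : Type} (M : KripkeModel α) : M.K → Fm α → Prop
  | _, .top => True
  | k, .atom p => M.val k p
  | k, .neg φ => ∀ k', M.le k k' → ¬ force M k' φ
  | k, .and φ ψ => force M k φ ∧ force M k ψ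
  | k, .or φ ψ => force M k φ ∨ force M k ψ
  | k, .imp φ ψ => ∀ k', M.le k k' → force M k' φ → force M k' ψ

/-- →-free formulas: built using only ¬, ∨, ∧, ⊤ and atoms. -/
def NoImp {α : Type} : Fm α → Prop
  | .top => True
  | .atom _ => True
  | .neg φ => NoImp φ
  | .and φ ψ => NoImp φ ∧ NoImp ψ
  | .or φ ψ => NoImp φ ∧ NoImp ψ
  | .imp _ _ => False

/-- The connected 3-node Kripke model with nodes a = 0, b = 1, c = 2; order the
reflexive closure of a ≺ b, c ≺ b; atoms p = 0, q = 1; a ⊩ p, b ⊩ p,q, and c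
forces no atom. -/
def M13 : KripkeModel (Fin 2) where
  K := Fin 3
  le := fun x y => x = y ∨ (x = 0 ∧ y = 1) ∨ (x = 2 ∧ y = 1)
  refl := by decide
  trans := by decide
  antisymm := by decide
  val := fun k p => (k = 0 ∧ p = 0) ∨ k = 1
  persist := by decide

theorem force_mono {α : Type} (M : KripkeModel α) (φ : Fm α) :
    ∀ {k k'}, M.le k k' → force M k φ → force M k' φ := by
  induction φ with
  | top => exact fun _ _ => trivial
  | atom p => exact fun h hf => M.persist h hf
  | neg φ _ => exact fun h hf k'' h' => hf k'' (M.trans h h')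
  | and φ ψ ihφ ihψ => exact fun h hf => ⟨ihφ h hf.1, ihψ h hf.2⟩
  | or φ ψ ihφ ihψ => exact fun h hf => hf.imp (ihφ h) (ihψ h)
  | imp φ ψ _ _ => exact fun h hf k'' h' => hf k'' (M.trans h h')

theorem NoImp.force_of_force {α : Type} {M : KripkeModel α} {k₁ k₂ : M.K}
    (hval : ∀ p, M.val k₁ p → M.val k₂ p)
    (hcof : ∀ k, M.le k₂ k → ∃ k', M.le k₁ k' ∧ M.le k k') {φ : Fm α} (hφ : NoImp φ)
    (h : force M k₁ φ) : force M k₂ φ := by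
  induction φ with
  | top => trivial
  | atom p => exact hval p h
  | neg φ _ =>
    intro k hk hφk
    obtain ⟨k', hk₁k', hkk'⟩ := hcof k hk
    exact h k' hk₁k' (force_mono M φ hkk' hφk)
  | and φ ψ ihφ ihψ => exact ⟨ihφ hφ.1 h.1, ihψ hφ.2 h.2⟩
  | or φ ψ ihφ ihψ => exact h.imp (ihφ hφ.1) (ihψ hφ.2)
  | imp _ _ _ _ => exact hφ.elim

theorem no_imp_force_down_general (θ : Fm (Fin 2)) (hθ : NoImp θ)
    (hc : force M13 (2 : Fin 3) θ) :
    force M13 (0 : Fin 3) θ :=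
  hθ.force_of_force (by simp only [M13]; decide) (by simp only [M13]; decide) hc

/-- In the model M13, every →-free formula θ in atoms p, q forced at both b and
c is forced at a. -/
theorem no_imp_force_down (θ : Fm (Fin 2)) (hθ : NoImp θ)
    (hb : force M13 (1 : Fin 3) θ) (hc : force M13 (2 : Fin 3) θ) :
    force M13 (0 : Fin 3) θ :=
  no_imp_force_down_general θ hθ hc
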